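/- Let 2/5 < λ < 1 and let M be the qutrit channel with Kraus operators K₀ = √λ·I₃, K₁ = √(1−λ)·(e₀e₁† + e₁e₀†), K₂ = √(1−λ)·e₁e₂† acting on ℂ³. Then the maximum entanglement fidelity O(M) = λ, and this value is attained by the maximally entangled input ρ = φφ†, where φ = (1/√3) Σ_{a=0}^{2} e_a ⊗ e_a. (Thus M is a non-unital channel whose optimal input is maximally entangled.) -/

import Mathlib

/-!
Write `w_i = (I ⊗ K_i)† φ`, so that the fidelity is `Σ_i ⟨w_i, ρ w_i⟩`. For this channel
`w_i = √(c_i) · 1_{S_i}` with disjoint supports `S_0 = {00, 11, 22}`, `S_1 = {01, 10}`,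
`S_2 = {12}` and `c = (λ/3, (1-λ)/3, (1-λ)/3)`. Summing the `2 × 2` minors
`Re ρ_pq + Re ρ_qp ≤ ρ_pp + ρ_qq` of a positive semidefinite `ρ` gives
`Re Σ_{p,q ∈ S} ρ_pq ≤ |S| Σ_{p ∈ S} ρ_pp`, so the fidelity is at most
`max_i c_i |S_i| · tr ρ = max (λ, 2(1-λ)/3) = λ`. The maximally entangled input attains it
because `φ` is proportional to `w_0`.
-/

open Matrix
open scoped Kronecker ComplexOrder

/-- The maximally entangled unit vector `φ = (1/√d) Σ_a e_a ⊗ e_a`. -/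
noncomputable def maxEnt (n : Type*) [Fintype n] [DecidableEq n] : n × n → ℂ :=
  fun p => if p.1 = p.2 then ((1 / Real.sqrt (Fintype.card n) : ℝ) : ℂ) else 0

/-- The output `(id ⊗ N)(ρ) = Σ_i (I ⊗ K_i) ρ (I ⊗ K_i)†` of one half of `ρ`
through the channel with Kraus operators `K`. -/
noncomputable def chanOut {n : Type*} [Fintype n] [DecidableEq n] {ι : Type*} [Fintype ι]
    (K : ι → Matrix n n ℂ) (ρ : Matrix (n × n) (n × n) ℂ) : Matrix (n × n) (n × n) ℂ :=
  ∑ i, ((1 : Matrix n n ℂ) ⊗ₖ K i) * ρ * ((1 : Matrix n n ℂ) ⊗ₖ K i)ᴴ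

/-- The entanglement fidelity `⟨φ, ((id⊗N)(ρ)) φ⟩`. -/
noncomputable def fid {n : Type*} [Fintype n] [DecidableEq n] {ι : Type*} [Fintype ι]
    (K : ι → Matrix n n ℂ) (ρ : Matrix (n × n) (n × n) ℂ) : ℂ :=
  star (maxEnt n) ⬝ᵥ (chanOut K ρ *ᵥ maxEnt n)

/-- A density matrix: positive semidefinite with unit trace. -/
def IsDensity {m : Type*} [Fintype m] (ρ : Matrix m m ℂ) : Prop :=
  ρ.PosSemidef ∧ ρ.trace = 1

/-- The set of (real) entanglement fidelity values achievable with density-matrix inputs;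
its supremum is the maximum entanglement fidelity `O(N)`. -/
noncomputable def fidSet {n : Type*} [Fintype n] [DecidableEq n] {ι : Type*} [Fintype ι]
    (K : ι → Matrix n n ℂ) : Set ℝ :=
  {x : ℝ | ∃ ρ : Matrix (n × n) (n × n) ℂ, IsDensity ρ ∧ fid K ρ = (x : ℂ)}

open Finset Function

namespace Matrix.PosSemidef

variable {m : Type*} [Fintype m] [DecidableEq m] {ρ : Matrix m m ℂ}

lemma re_add_re_le (hρ : ρ.PosSemidef) (p q : m) :
    (ρ p q).re + (ρ q p).re ≤ (ρ p p).re + (ρ q q).re := by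
  have h := (Complex.le_def.mp (hρ.dotProduct_mulVec_nonneg (Pi.single p 1 - Pi.single q 1))).1
  simp only [star_sub, mulVec_sub, sub_dotProduct, dotProduct_sub, Pi.star_single, star_one,
    mulVec_single_one, single_dotProduct, one_mul, col_apply, Complex.sub_re,
    Complex.zero_re] at h
  linarith

lemma re_sum_sum_le (hρ : ρ.PosSemidef) (S : Finset m) :
    (∑ p ∈ S, ∑ q ∈ S, ρ p q).re ≤ #S * ∑ p ∈ S, (ρ p p).re := by
  have hsym : ∑ p ∈ S, ∑ q ∈ S, (ρ p q).re = ∑ p ∈ S, ∑ q ∈ S, (ρ q p).re := sum_comm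
  have hpair : ∑ p ∈ S, ∑ q ∈ S, ((ρ p q).re + (ρ q p).re)
      ≤ ∑ p ∈ S, ∑ q ∈ S, ((ρ p p).re + (ρ q q).re) :=
    sum_le_sum fun p _ => sum_le_sum fun q _ => hρ.re_add_re_le p q
  simp only [sum_add_distrib, sum_const, nsmul_eq_mul, ← mul_sum] at hpair
  simp only [Complex.re_sum]
  linarith

end Matrix.PosSemidef

lemma IsDensity.re_sum_mul_sum_sum_le {m ι : Type*} [Fintype m] [DecidableEq m] [Fintype ι]
    {ρ : Matrix m m ℂ} (hρ : IsDensity ρ) {S : ι → Finset m} (hS : Pairwise (Disjoint on S))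
    {c : ι → ℝ} (hc : ∀ i, 0 ≤ c i) {C : ℝ} (hC : 0 ≤ C) (hcC : ∀ i, c i * #(S i) ≤ C) :
    (∑ i, (c i : ℂ) * ∑ p ∈ S i, ∑ q ∈ S i, ρ p q).re ≤ C := by
  have hdiag : ∀ p, 0 ≤ (ρ p p).re := fun p => (Complex.le_def.mp hρ.1.diag_nonneg).1
  calc (∑ i, (c i : ℂ) * ∑ p ∈ S i, ∑ q ∈ S i, ρ p q).re
      = ∑ i, c i * (∑ p ∈ S i, ∑ q ∈ S i, ρ p q).re := by
        simp only [Complex.re_sum, Complex.re_ofReal_mul]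
    _ ≤ ∑ i, c i * (#(S i) * ∑ p ∈ S i, (ρ p p).re) :=
        sum_le_sum fun i _ => mul_le_mul_of_nonneg_left (hρ.1.re_sum_sum_le _) (hc i)
    _ ≤ ∑ i, C * ∑ p ∈ S i, (ρ p p).re := sum_le_sum fun i _ => by
        rw [← mul_assoc]
        exact mul_le_mul_of_nonneg_right (hcC i) (sum_nonneg fun p _ => hdiag p)
    _ = C * ∑ p ∈ univ.biUnion S, (ρ p p).re := by
        rw [sum_biUnion (hS.set_pairwise _), mul_sum]
    _ ≤ C * ∑ p, (ρ p p).re := mul_le_mul_of_nonneg_left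
        (sum_le_sum_of_subset_of_nonneg (subset_univ _) fun p _ _ => hdiag p) hC
    _ = C := by
        have htr := congrArg Complex.re hρ.2
        simp only [trace, Matrix.diag_apply, Complex.re_sum, Complex.one_re] at htr
        rw [htr, mul_one]

lemma star_dotProduct_mulVec_ite_mem {m : Type*} [Fintype m] (ρ : Matrix m m ℂ)
    (S : Finset m) [DecidablePred (· ∈ S)] (c : ℝ) :
    star (fun p => if p ∈ S then (c : ℂ) else 0) ⬝ᵥ (ρ *ᵥ fun p => if p ∈ S then (c : ℂ) else 0)
      = ((c ^ 2 : ℝ) : ℂ) * ∑ p ∈ S, ∑ q ∈ S, ρ p q := by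
  simp only [dotProduct, Pi.star_apply, apply_ite, RCLike.star_def, Complex.conj_ofReal, star_zero,
    mulVec, mul_zero, sum_ite_mem_eq, mul_sum, ite_mul, zero_mul, sum_ite_irrel, sum_const_zero,
    Complex.ofReal_pow]
  exact sum_congr rfl fun _ _ => sum_congr rfl fun _ _ => by ring

section Fidelity

variable {n : Type*} [Fintype n] [DecidableEq n]

lemma conjTranspose_one_kronecker_mulVec_maxEnt (M : Matrix n n ℂ) :
    ((1 : Matrix n n ℂ) ⊗ₖ M)ᴴ *ᵥ maxEnt n =
      fun p => star (M p.1 p.2) * ((1 / Real.sqrt (Fintype.card n) : ℝ) : ℂ) := by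
  funext p
  simp [mulVec, dotProduct, maxEnt, Fintype.sum_prod_type, conjTranspose_apply,
    one_apply, apply_ite, ite_mul, Finset.sum_ite_eq, Finset.sum_ite_eq']

lemma fid_eq_sum_star_dotProduct_mulVec {ι : Type*} [Fintype ι] (K : ι → Matrix n n ℂ)
    (ρ : Matrix (n × n) (n × n) ℂ) :
    fid K ρ = ∑ i, star (((1 : Matrix n n ℂ) ⊗ₖ K i)ᴴ *ᵥ maxEnt n) ⬝ᵥ
      (ρ *ᵥ (((1 : Matrix n n ℂ) ⊗ₖ K i)ᴴ *ᵥ maxEnt n)) := by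
  simp only [fid, chanOut, sum_mulVec, dotProduct_sum, star_mulVec, conjTranspose_conjTranspose,
    ← mulVec_mulVec, dotProduct_mulVec, vecMul_vecMul]

lemma maxEnt_mul_star_maxEnt (p q : n × n) :
    maxEnt n p * star (maxEnt n q) =
      if p.1 = p.2 ∧ q.1 = q.2 then ((Fintype.card n : ℂ))⁻¹ else 0 := by
  have hsq : ((Real.sqrt (Fintype.card n) : ℂ))⁻¹ * ((Real.sqrt (Fintype.card n) : ℂ))⁻¹
      = ((Fintype.card n : ℂ))⁻¹ := by
    rw [← mul_inv, ← Complex.ofReal_mul, Real.mul_self_sqrt (Nat.cast_nonneg _)]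
    push_cast
    rfl
  by_cases hp : p.1 = p.2 <;> by_cases hq : q.1 = q.2 <;> simp [maxEnt, hp, hq, hsq]

lemma isDensity_vecMulVec_maxEnt [Nonempty n] :
    IsDensity (vecMulVec (maxEnt n) (star (maxEnt n))) := by
  refine ⟨posSemidef_vecMulVec_self_star _, ?_⟩
  rw [trace_vecMulVec]
  simp only [dotProduct, Pi.star_apply, maxEnt_mul_star_maxEnt, and_self]
  rw [Fintype.sum_prod_type]
  simp [Finset.sum_ite_eq]

end Fidelity

noncomputable def qutritKraus (l : ℝ) : Fin 3 → Matrix (Fin 3) (Fin 3) ℂ :=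
  ![((Real.sqrt l : ℝ) : ℂ) • (1 : Matrix (Fin 3) (Fin 3) ℂ),
    ((Real.sqrt (1 - l) : ℝ) : ℂ) • (Matrix.single 0 1 (1 : ℂ) + Matrix.single 1 0 (1 : ℂ)),
    ((Real.sqrt (1 - l) : ℝ) : ℂ) • Matrix.single 1 2 (1 : ℂ)]

def qutritSupport : Fin 3 → Finset (Fin 3 × Fin 3) :=
  ![{(0, 0), (1, 1), (2, 2)}, {(0, 1), (1, 0)}, {(1, 2)}]

def qutritWeight (l : ℝ) : Fin 3 → ℝ :=
  ![l, 1 - l, 1 - l]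

lemma pairwise_disjoint_qutritSupport : Pairwise (Disjoint on qutritSupport) := by
  intro i j hij
  fin_cases i <;> fin_cases j <;> first | exact absurd rfl hij | decide

lemma conjTranspose_one_kronecker_qutritKraus_mulVec_maxEnt (l : ℝ) (i : Fin 3) :
    ((1 : Matrix (Fin 3) (Fin 3) ℂ) ⊗ₖ qutritKraus l i)ᴴ *ᵥ maxEnt (Fin 3) =
      fun p => if p ∈ qutritSupport i then
        ((Real.sqrt (qutritWeight l i) / Real.sqrt 3 : ℝ) : ℂ) else 0 := by
  rw [conjTranspose_one_kronecker_mulVec_maxEnt]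
  funext ⟨a, b⟩
  fin_cases i <;> fin_cases a <;> fin_cases b <;>
    simp [qutritKraus, qutritSupport, qutritWeight, Matrix.single, one_apply, div_eq_mul_inv]

lemma fid_qutritKraus {l : ℝ} (hl0 : 0 ≤ l) (hl1 : l ≤ 1)
    (ρ : Matrix (Fin 3 × Fin 3) (Fin 3 × Fin 3) ℂ) :
    fid (qutritKraus l) ρ = ∑ i, ((qutritWeight l i / 3 : ℝ) : ℂ) *
      ∑ p ∈ qutritSupport i, ∑ q ∈ qutritSupport i, ρ p q := by
  rw [fid_eq_sum_star_dotProduct_mulVec]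
  refine sum_congr rfl fun i _ => ?_
  have hw : 0 ≤ qutritWeight l i := by
    fin_cases i <;> simp [qutritWeight] <;> linarith
  rw [conjTranspose_one_kronecker_qutritKraus_mulVec_maxEnt, star_dotProduct_mulVec_ite_mem,
    div_pow, Real.sq_sqrt hw, Real.sq_sqrt zero_le_three]

lemma fid_qutritKraus_maxEnt {l : ℝ} (hl0 : 0 ≤ l) (hl1 : l ≤ 1) :
    fid (qutritKraus l) (vecMulVec (maxEnt (Fin 3)) (star (maxEnt (Fin 3)))) = l := by
  rw [fid_qutritKraus hl0 hl1]
  simp only [vecMulVec_apply, Pi.star_apply, maxEnt_mul_star_maxEnt]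
  simp only [qutritWeight, Complex.ofReal_div, Complex.ofReal_ofNat, qutritSupport, Fin.isValue,
    Fintype.card_fin, Nat.cast_ofNat, Fin.sum_univ_three, cons_val_zero, mem_insert, Prod.mk.injEq,
    zero_ne_one, and_self, mem_singleton, Fin.reduceEq, or_self, not_false_eq_true, sum_insert,
    and_true, sum_singleton, ↓reduceIte, cons_val_one, Complex.ofReal_sub, Complex.ofReal_one,
    one_ne_zero, and_false, add_zero, sum_const_zero, mul_zero, Matrix.cons_val]
  ring

lemma re_fid_qutritKraus_le {l : ℝ} (hl0 : 2 / 5 < l) (hl1 : l < 1)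
    {ρ : Matrix (Fin 3 × Fin 3) (Fin 3 × Fin 3) ℂ} (hρ : IsDensity ρ) :
    (fid (qutritKraus l) ρ).re ≤ l := by
  rw [fid_qutritKraus (by linarith) hl1.le]
  -- the squared norms `l`, `2(1 - l)/3`, `(1 - l)/3` of the three weight vectors are `≤ l`
  -- exactly when `2/5 ≤ l`
  refine hρ.re_sum_mul_sum_sum_le pairwise_disjoint_qutritSupport (fun i => ?_) (by linarith)
    (fun i => ?_) <;>
    fin_cases i <;> simp [qutritWeight, qutritSupport] <;> linarith

theorem stmt_16 (l : ℝ) (hl0 : 2 / 5 < l) (hl1 : l < 1)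
    (K : Fin 3 → Matrix (Fin 3) (Fin 3) ℂ)
    (hK : K = ![((Real.sqrt l : ℝ) : ℂ) • (1 : Matrix (Fin 3) (Fin 3) ℂ),
                ((Real.sqrt (1 - l) : ℝ) : ℂ) •
                  (Matrix.single 0 1 (1 : ℂ) + Matrix.single 1 0 (1 : ℂ)),
                ((Real.sqrt (1 - l) : ℝ) : ℂ) • Matrix.single 1 2 (1 : ℂ)]) :
    fid K (Matrix.vecMulVec (maxEnt (Fin 3)) (star (maxEnt (Fin 3)))) = ((l : ℝ) : ℂ) ∧
      IsGreatest (fidSet K) l := by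
  obtain rfl : K = qutritKraus l := hK
  have hval := fid_qutritKraus_maxEnt (by linarith) hl1.le
  refine ⟨hval, ⟨_, isDensity_vecMulVec_maxEnt, hval⟩, ?_⟩
  rintro x ⟨ρ, hρ, hx⟩
  simpa [hx] using re_fid_qutritKraus_le hl0 hl1 hρ
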